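/- With notation as above, the map μ_δ = ξ_δ ∘ μ : a × a → P_δ(a)* satisfies the super cyclic condition: μ_δ(x,y)(P_δ(z)) = (-1)^{|x|(|y|+|z|)} μ_δ(y,z)(P_δ(x)) for all homogeneous x, y, z ∈ a. -/

import Mathlib

/-- The sign `(-1)^{ij}` for `i j : ZMod 2`. -/
def sgn (F : Type*) [Field F] (i j : ZMod 2) : F := (-1) ^ (i * j).val

/-- The orthogonal `J^⊥ = {w : B(j, w) = 0 for all j ∈ J}` of a subspace with
respect to a bilinear form `B`. -/
def orth {F V : Type*} [Field F] [AddCommGroup V] [Module F V]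
    (B : V →ₗ[F] V →ₗ[F] F) (J : Submodule F V) : Submodule F V where
  carrier := {w | ∀ j ∈ J, B j w = 0}
  add_mem' := by
    intro w w' hw hw' j hj
    simp [hw j hj, hw' j hj]
  zero_mem' := by
    intro j hj
    simp
  smul_mem' := by
    intro c w hw j hj
    simp [hw j hj]

/-!
Invariance and super symmetry of `B` make the full bracket super cyclic:
`B([x,y],z) = B(x,[y,z]) = (-1)^{|x|(|y|+|z|)} B([y,z],x)`. For `x, y, z ∈ aa`, the
`aa`- and `hh`-components of `[x,y]` pair to zero with `z`, because `aa` is isotropic and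
`aa ⊆ hh^⊥`; so `B([x,y],z) = B(μ(x,y),z)`, and likewise for `B([y,z],x)`.
-/

section

variable {F V : Type*} [Field F] [AddCommGroup V] [Module F V]

theorem bilin_bracket_super_cyclic {g : ZMod 2 → Submodule F V} {br : V →ₗ[F] V →ₗ[F] V}
    {B : V →ₗ[F] V →ₗ[F] F}
    (hbr_even : ∀ i j : ZMod 2, ∀ x y : V, x ∈ g i → y ∈ g j → br x y ∈ g (i + j))
    (hB_symm : ∀ i j : ZMod 2, ∀ x y : V, x ∈ g i → y ∈ g j →
      B x y = sgn F i j * B y x)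
    (hB_inv : ∀ x y z : V, B (br x y) z = B x (br y z))
    {i j k : ZMod 2} {x y z : V} (hx : x ∈ g i) (hy : y ∈ g j) (hz : z ∈ g k) :
    B (br x y) z = sgn F i (j + k) * B (br y z) x := by
  rw [hB_inv]
  exact hB_symm i (j + k) x (br y z) hx (hbr_even j k y z hy hz)

theorem bilin_add_add_eq_right {B : V →ₗ[F] V →ₗ[F] F} {a h : Submodule F V}
    (ha_iso : ∀ x ∈ a, ∀ y ∈ a, B x y = 0) {u v w z : V}
    (hu : u ∈ a) (hv : v ∈ h) (hz : z ∈ a) (hzh : z ∈ orth B h) :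
    B (u + v + w) z = B w z := by
  simp [ha_iso u hu z hz, hzh v hv]

end

theorem mu_delta_cyclic_general
    (F V : Type*) [Field F]
    [AddCommGroup V] [Module F V]
    (g : ZMod 2 → Submodule F V)
    (br : V →ₗ[F] V →ₗ[F] V)
    -- `(g, [·,·])` is a Lie super algebra
    (hbr_even : ∀ i j : ZMod 2, ∀ x y : V, x ∈ g i → y ∈ g j → br x y ∈ g (i + j))
    -- `B` is an invariant metric of degree `δ`
    (B : V →ₗ[F] V →ₗ[F] F)
    (hB_symm : ∀ i j : ZMod 2, ∀ x y : V, x ∈ g i → y ∈ g j →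
      B x y = sgn F i j * B y x)
    (hB_inv : ∀ x y z : V, B (br x y) z = B x (br y z))
    -- `I` is a minimal graded ideal, contained in `I^⊥` and abelian
    (I : Submodule F V)
    -- graded complements: `I^⊥ = hh ⊕ I`, `hh^⊥ = aa ⊕ I`, `aa` isotropic,
    -- `g = aa ⊕ hh ⊕ I`, and `[I, I^⊥] = 0`
    (hh aa : Submodule F V)
    (hhhperp : aa ⊔ I = orth B hh)
    (haa_iso : ∀ x ∈ aa, ∀ y ∈ aa, B x y = 0)
    -- components of the bracket with respect to `g = aa ⊕ hh ⊕ I`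
    (bra lam mu : V →ₗ[F] V →ₗ[F] V)
    (hcomp_a : ∀ x ∈ aa, ∀ y ∈ aa, br x y = bra x y + lam x y + mu x y ∧
      bra x y ∈ aa ∧ lam x y ∈ hh ∧ mu x y ∈ I)
    (i j k : ZMod 2) (x y z : V)
    (hxa : x ∈ aa) (hx : x ∈ g i) (hya : y ∈ aa) (hy : y ∈ g j)
    (hza : z ∈ aa) (hz : z ∈ g k) :
    B (mu x y) z = sgn F i (j + k) * B (mu y z) x := by
  have haa_orth : ∀ w ∈ aa, w ∈ orth B hh := fun w hw => hhhperp ▸ Submodule.mem_sup_left hw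
  obtain ⟨hxy, hxya, hxyh, -⟩ := hcomp_a x hxa y hya
  obtain ⟨hyz, hyza, hyzh, -⟩ := hcomp_a y hya z hza
  have hμxy : B (br x y) z = B (mu x y) z := by
    rw [hxy]; exact bilin_add_add_eq_right haa_iso hxya hxyh hza (haa_orth z hza)
  have hμyz : B (br y z) x = B (mu y z) x := by
    rw [hyz]; exact bilin_add_add_eq_right haa_iso hyza hyzh hxa (haa_orth x hxa)
  rw [← hμxy, ← hμyz]
  exact bilin_bracket_super_cyclic hbr_even hB_symm hB_inv hx hy hz

/-- in the decomposition `g = aa ⊕ hh ⊕ I`, the map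
`μ_δ = ξ_δ ∘ μ : aa × aa → P_δ(aa)*` satisfies the super cyclic condition
`μ_δ(x,y)(P_δ z) = (-1)^{|x|(|y|+|z|)} μ_δ(y,z)(P_δ x)`, i.e.
`B(μ(x,y), z) = (-1)^{|x|(|y|+|z|)} B(μ(y,z), x)` for homogeneous `x,y,z ∈ aa`. -/
theorem mu_delta_cyclic
    (F V : Type*) [Field F] [IsAlgClosed F] [CharZero F]
    [AddCommGroup V] [Module F V] [FiniteDimensional F V]
    (g : ZMod 2 → Submodule F V) (hg : DirectSum.IsInternal g)
    (br : V →ₗ[F] V →ₗ[F] V)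
    -- `(g, [·,·])` is a Lie super algebra
    (hbr_even : ∀ i j : ZMod 2, ∀ x y : V, x ∈ g i → y ∈ g j → br x y ∈ g (i + j))
    (hbr_skew : ∀ i j : ZMod 2, ∀ x y : V, x ∈ g i → y ∈ g j →
      br x y = -(sgn F i j) • br y x)
    (hbr_jac : ∀ i j k : ZMod 2, ∀ x y z : V, x ∈ g i → y ∈ g j → z ∈ g k →
      sgn F i k • br x (br y z) + sgn F j i • br y (br z x)
        + sgn F k j • br z (br x y) = 0)
    -- `B` is an invariant metric of degree `δ`
    (δ : ZMod 2) (B : V →ₗ[F] V →ₗ[F] F)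
    (hB_symm : ∀ i j : ZMod 2, ∀ x y : V, x ∈ g i → y ∈ g j →
      B x y = sgn F i j * B y x)
    (hB_inv : ∀ x y z : V, B (br x y) z = B x (br y z))
    (hB_nd : ∀ x : V, (∀ y : V, B x y = 0) → x = 0)
    (hB_deg : ∀ i j : ZMod 2, ∀ x y : V, x ∈ g i → y ∈ g j → i + j ≠ δ → B x y = 0)
    -- `g` is non-simple of dimension `> 1`
    (hdim : 1 < Module.finrank F V)
    (hns : ∃ J : Submodule F V, (∀ x : V, ∀ v ∈ J, br x v ∈ J) ∧
      J = (J ⊓ g 0) ⊔ (J ⊓ g 1) ∧ J ≠ ⊥ ∧ J ≠ ⊤)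
    -- `g` is indecomposable
    (hind : ¬ ∃ J : Submodule F V, (∀ x : V, ∀ v ∈ J, br x v ∈ J) ∧
      J = (J ⊓ g 0) ⊔ (J ⊓ g 1) ∧ J ≠ ⊥ ∧ J ≠ ⊤ ∧ IsCompl J (orth B J))
    -- `I` is a minimal graded ideal, contained in `I^⊥` and abelian
    (I : Submodule F V)
    (hI_ideal : ∀ x : V, ∀ v ∈ I, br x v ∈ I)
    (hI_graded : I = (I ⊓ g 0) ⊔ (I ⊓ g 1))
    (hI_ne : I ≠ ⊥)
    (hI_min : ∀ J : Submodule F V, (∀ x : V, ∀ v ∈ J, br x v ∈ J) →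
      J = (J ⊓ g 0) ⊔ (J ⊓ g 1) → J ≤ I → J = ⊥ ∨ J = I)
    (hI_deg : I ≤ orth B I)
    -- graded complements: `I^⊥ = hh ⊕ I`, `hh^⊥ = aa ⊕ I`, `aa` isotropic,
    -- `g = aa ⊕ hh ⊕ I`, and `[I, I^⊥] = 0`
    (hh aa : Submodule F V)
    (hhh_graded : hh = (hh ⊓ g 0) ⊔ (hh ⊓ g 1))
    (haa_graded : aa = (aa ⊓ g 0) ⊔ (aa ⊓ g 1))
    (hIperp : hh ⊔ I = orth B I)
    (hhhperp : aa ⊔ I = orth B hh)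
    (haa_iso : ∀ x ∈ aa, ∀ y ∈ aa, B x y = 0)
    (hdisj1 : Disjoint hh I)
    (hdisj2 : Disjoint aa (hh ⊔ I))
    (hsum : aa ⊔ (hh ⊔ I) = ⊤)
    (hcentral : ∀ α ∈ I, ∀ w ∈ hh ⊔ I, br α w = 0)
    -- components of the bracket with respect to `g = aa ⊕ hh ⊕ I`
    (bra lam mu rho tau brh gam : V →ₗ[F] V →ₗ[F] V)
    (hcomp_a : ∀ x ∈ aa, ∀ y ∈ aa, br x y = bra x y + lam x y + mu x y ∧
      bra x y ∈ aa ∧ lam x y ∈ hh ∧ mu x y ∈ I)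
    (hcomp_ah : ∀ x ∈ aa, ∀ u ∈ hh, br x u = rho x u + tau x u ∧
      rho x u ∈ hh ∧ tau x u ∈ I)
    (hcomp_h : ∀ u ∈ hh, ∀ v ∈ hh, br u v = brh u v + gam u v ∧
      brh u v ∈ hh ∧ gam u v ∈ I)
    (hcomp_aI : ∀ x ∈ aa, ∀ α ∈ I, br x α ∈ I)
    (i j k : ZMod 2) (x y z : V)
    (hxa : x ∈ aa) (hx : x ∈ g i) (hya : y ∈ aa) (hy : y ∈ g j)
    (hza : z ∈ aa) (hz : z ∈ g k) :
    B (mu x y) z = sgn F i (j + k) * B (mu y z) x :=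
  mu_delta_cyclic_general F V g br hbr_even B hB_symm hB_inv I hh aa hhhperp haa_iso bra lam mu
    hcomp_a i j k x y z hxa hx hya hy hza hz
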